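/- arXiv:1306.6105 — 4 statements merged into one kernel-verified Lean document; each statement's English description precedes it below -/
import Mathlib

section
/- Up to relabeling of the lines, there is a unique combinatorial arrangement of six lines with exactly three triple points in which each line passes through at least one triple point: labeling the lines L₁,…,L₆, the triple points are L₁∩L₂∩L₃, L₁∩L₄∩L₅, and L₂∩L₄∩L₆ (the arrangement B resembling a triangle inscribed in a triangle). -/
open Finset

lemma inter_card_one6 (a b c : Finset (Fin 6)) (ha : a.card = 3) (hb : b.card = 3) (hc : c.card = 3)
    (hu : a ∪ b ∪ c = Finset.univ)
    (hac : (a ∩ c).card ≤ 1) (hbc : (b ∩ c).card ≤ 1) : 1 ≤ (a ∩ b).card := by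
  have h6 : (a ∪ b ∪ c).card = 6 := by rw [hu]; simp
  have h1 := Finset.card_union_add_card_inter (a ∪ b) c
  have h2 := Finset.card_union_add_card_inter a b
  have h3 : (a ∪ b) ∩ c = (a ∩ c) ∪ (b ∩ c) := Finset.union_inter_distrib_right a b c
  have h4 := Finset.card_union_le (a ∩ c) (b ∩ c)
  rw [h3] at h1
  omega

lemma sep_aux6 (a b c : Finset (Fin 6)) (ha : a.card = 3) (hb : b.card = 3) (hc : c.card = 3)
    (hu : a ∪ b ∪ c = Finset.univ) (hab : (a ∩ b).card = 1)
    (y z : Fin 6) (hy : a ∩ c = {y}) (hz : b ∩ c = {z}) : y ≠ z := by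
  have h6 : (a ∪ b ∪ c).card = 6 := by rw [hu]; simp
  have h1 := Finset.card_union_add_card_inter (a ∪ b) c
  have h2 := Finset.card_union_add_card_inter a b
  have h3 : (a ∪ b) ∩ c = (a ∩ c) ∪ (b ∩ c) := Finset.union_inter_distrib_right a b c
  rw [h3, hy, hz] at h1
  intro h
  subst h
  simp only [Finset.union_self, Finset.card_singleton] at h1
  omega

def pick6 (x y p z q r : Fin 6) : Fin 6 → Fin 6 := fun i =>
  if i.val = 0 then x else if i.val = 1 then y else if i.val = 2 then p
  else if i.val = 3 then z else if i.val = 4 then q else r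

lemma inj6 (x y p z q r : Fin 6) (h1 : x ≠ y) (h2 : x ≠ p) (h3 : x ≠ z) (h4 : x ≠ q)
    (h5 : x ≠ r) (h6 : y ≠ p) (h7 : y ≠ z) (h8 : y ≠ q) (h9 : y ≠ r) (h10 : p ≠ z)
    (h11 : p ≠ q) (h12 : p ≠ r) (h13 : z ≠ q) (h14 : z ≠ r) (h15 : q ≠ r) :
    Function.Injective (pick6 x y p z q r) := by
  intro i j hij
  fin_cases i <;> fin_cases j <;> simp [pick6] at hij ⊢ <;> simp_all


/-- Up to relabeling of the six lines, there is a unique combinatorial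
arrangement of six lines with exactly three triple points in which every line
passes through at least one triple point: the arrangement `B` with triple
points `L₁∩L₂∩L₃`, `L₁∩L₄∩L₅` and `L₂∩L₄∩L₆`.  A combinatorial arrangement is
given by the set `T` of concurrent triples of lines, any two distinct triple
points sharing at most one line. -/
theorem stmt8 (T : Finset (Finset (Fin 6)))
    -- each triple point lies on exactly three lines
    (hsize : ∀ t ∈ T, t.card = 3)
    -- two distinct triple points share at most one line
    (hpair : ∀ t₁ ∈ T, ∀ t₂ ∈ T, t₁ ≠ t₂ → (t₁ ∩ t₂).card ≤ 1)
    -- each line passes through at least one triple point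
    (hcover : ∀ i : Fin 6, ∃ t ∈ T, i ∈ t)
    -- there are exactly three triple points
    (hcard : T.card = 3) :
    ∃ σ : Equiv.Perm (Fin 6),
      T.image (fun t => t.image σ) =
        {({0, 1, 2} : Finset (Fin 6)), {0, 3, 4}, {1, 3, 5}} := by
  obtain ⟨a, b, c, hab, hac, hbc, rfl⟩ := Finset.card_eq_three.mp hcard
  have maT : a ∈ ({a, b, c} : Finset (Finset (Fin 6))) := by simp
  have mbT : b ∈ ({a, b, c} : Finset (Finset (Fin 6))) := by simp
  have mcT : c ∈ ({a, b, c} : Finset (Finset (Fin 6))) := by simp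
  have ha := hsize a maT
  have hb := hsize b mbT
  have hc := hsize c mcT
  have hu : a ∪ b ∪ c = Finset.univ := by
    apply Finset.eq_univ_of_forall
    intro i
    obtain ⟨t, ht, hit⟩ := hcover i
    simp only [Finset.mem_insert, Finset.mem_singleton] at ht
    rcases ht with rfl | rfl | rfl <;> simp [hit]
  have iab : (a ∩ b).card ≤ 1 := hpair a maT b mbT hab
  have iac : (a ∩ c).card ≤ 1 := hpair a maT c mcT hac
  have ibc : (b ∩ c).card ≤ 1 := hpair b mbT c mcT hbc
  have hu2 : a ∪ c ∪ b = Finset.univ := by rw [← hu]; ext i; simp; tauto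
  have hu3 : b ∪ c ∪ a = Finset.univ := by rw [← hu]; ext i; simp; tauto
  have iba : (b ∩ a).card ≤ 1 := by rw [Finset.inter_comm]; exact iab
  have ica : (c ∩ a).card ≤ 1 := by rw [Finset.inter_comm]; exact iac
  have icb : (c ∩ b).card ≤ 1 := by rw [Finset.inter_comm]; exact ibc
  have hab1 : (a ∩ b).card = 1 := le_antisymm iab (inter_card_one6 a b c ha hb hc hu iac ibc)
  have hac1 : (a ∩ c).card = 1 := le_antisymm iac (inter_card_one6 a c b ha hc hb hu2 iab icb)
  have hbc1 : (b ∩ c).card = 1 := le_antisymm ibc (inter_card_one6 b c a hb hc ha hu3 iba ica)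
  obtain ⟨x, hx⟩ := Finset.card_eq_one.mp hab1
  obtain ⟨y, hy⟩ := Finset.card_eq_one.mp hac1
  obtain ⟨z, hz⟩ := Finset.card_eq_one.mp hbc1
  have hba : b ∩ a = {x} := by rw [Finset.inter_comm]; exact hx
  have hca : c ∩ a = {y} := by rw [Finset.inter_comm]; exact hy
  have hcb : c ∩ b = {z} := by rw [Finset.inter_comm]; exact hz
  have hba1 : (b ∩ a).card = 1 := by rw [hba]; rfl
  have hca1 : (c ∩ a).card = 1 := by rw [hca]; rfl
  -- memberships
  have xa : x ∈ a := Finset.mem_of_mem_inter_left (hx ▸ Finset.mem_singleton_self x)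
  have xb : x ∈ b := Finset.mem_of_mem_inter_right (hx ▸ Finset.mem_singleton_self x)
  have ya : y ∈ a := Finset.mem_of_mem_inter_left (hy ▸ Finset.mem_singleton_self y)
  have yc : y ∈ c := Finset.mem_of_mem_inter_right (hy ▸ Finset.mem_singleton_self y)
  have zb : z ∈ b := Finset.mem_of_mem_inter_left (hz ▸ Finset.mem_singleton_self z)
  have zc : z ∈ c := Finset.mem_of_mem_inter_right (hz ▸ Finset.mem_singleton_self z)
  -- distinctness of x y z
  have hyz : y ≠ z := sep_aux6 a b c ha hb hc hu hab1 y z hy hz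
  have hxy : x ≠ y := sep_aux6 b c a hb hc ha hu3 hbc1 x y hba hca
  have hxz : x ≠ z := sep_aux6 a c b ha hc hb hu2 hac1 x z hx hcb
  -- third points
  have hpa : (a \ {x, y}).card = 1 := by
    rw [Finset.card_sdiff_of_subset (by intro i hi; simp at hi; rcases hi with rfl | rfl <;> assumption)]
    rw [ha, Finset.card_insert_of_notMem (by simpa using hxy), Finset.card_singleton]
  have hqb : (b \ {x, z}).card = 1 := by
    rw [Finset.card_sdiff_of_subset (by intro i hi; simp at hi; rcases hi with rfl | rfl <;> assumption)]
    rw [hb, Finset.card_insert_of_notMem (by simpa using hxz), Finset.card_singleton]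
  have hrc : (c \ {y, z}).card = 1 := by
    rw [Finset.card_sdiff_of_subset (by intro i hi; simp at hi; rcases hi with rfl | rfl <;> assumption)]
    rw [hc, Finset.card_insert_of_notMem (by simpa using hyz), Finset.card_singleton]
  obtain ⟨p, hp⟩ := Finset.card_eq_one.mp hpa
  obtain ⟨q, hq⟩ := Finset.card_eq_one.mp hqb
  obtain ⟨r, hr⟩ := Finset.card_eq_one.mp hrc
  have hpm : p ∈ a ∧ p ≠ x ∧ p ≠ y := by
    have := hp ▸ Finset.mem_singleton_self p; simp at this; tauto
  have hqm : q ∈ b ∧ q ≠ x ∧ q ≠ z := by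
    have := hq ▸ Finset.mem_singleton_self q; simp at this; tauto
  have hrm : r ∈ c ∧ r ≠ y ∧ r ≠ z := by
    have := hr ▸ Finset.mem_singleton_self r; simp at this; tauto
  obtain ⟨pa, pnx, pny⟩ := hpm
  obtain ⟨qb, qnx, qnz⟩ := hqm
  obtain ⟨rc, rny, rnz⟩ := hrm
  have pnb : p ∉ b := fun h => pnx (by have : p ∈ a ∩ b := Finset.mem_inter.mpr ⟨pa, h⟩; rw [hx] at this; simpa using this)
  have pnc : p ∉ c := fun h => pny (by have : p ∈ a ∩ c := Finset.mem_inter.mpr ⟨pa, h⟩; rw [hy] at this; simpa using this)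
  have qna : q ∉ a := fun h => qnx (by have : q ∈ a ∩ b := Finset.mem_inter.mpr ⟨h, qb⟩; rw [hx] at this; simpa using this)
  have qnc : q ∉ c := fun h => qnz (by have : q ∈ b ∩ c := Finset.mem_inter.mpr ⟨qb, h⟩; rw [hz] at this; simpa using this)
  have rna : r ∉ a := fun h => rny (by have : r ∈ a ∩ c := Finset.mem_inter.mpr ⟨h, rc⟩; rw [hy] at this; simpa using this)
  have rnb : r ∉ b := fun h => rnz (by have : r ∈ b ∩ c := Finset.mem_inter.mpr ⟨h, rc⟩; rw [hz] at this; simpa using this)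
  -- remaining distinctness
  have pnz : p ≠ z := fun h => pnb (h ▸ zb)
  have pnq : p ≠ q := fun h => pnb (h ▸ qb)
  have pnr : p ≠ r := fun h => pnc (h ▸ rc)
  have qny : q ≠ y := fun h => qna (h ▸ ya)
  have qnr : q ≠ r := fun h => qnc (h ▸ rc)
  have rnx : r ≠ x := fun h => rna (h ▸ xa)
  -- set descriptions
  have haxyp : a = {x, y, p} := by
    refine (Finset.eq_of_subset_of_card_le ?_ ?_).symm
    · intro i hi; simp at hi; rcases hi with rfl | rfl | rfl <;> assumption
    · exact le_of_eq (by rw [ha, Finset.card_eq_three.mpr ⟨x, y, p, hxy, Ne.symm pnx, Ne.symm pny, rfl⟩])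
  have hbxzq : b = {x, z, q} := by
    refine (Finset.eq_of_subset_of_card_le ?_ ?_).symm
    · intro i hi; simp at hi; rcases hi with rfl | rfl | rfl <;> assumption
    · exact le_of_eq (by rw [hb, Finset.card_eq_three.mpr ⟨x, z, q, hxz, Ne.symm qnx, Ne.symm qnz, rfl⟩])
  have hcyzr : c = {y, z, r} := by
    refine (Finset.eq_of_subset_of_card_le ?_ ?_).symm
    · intro i hi; simp at hi; rcases hi with rfl | rfl | rfl <;> assumption
    · exact le_of_eq (by rw [hc, Finset.card_eq_three.mpr ⟨y, z, r, hyz, Ne.symm rny, Ne.symm rnz, rfl⟩])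
  -- the permutation
  have hginj : Function.Injective (pick6 x y p z q r) :=
    inj6 x y p z q r hxy (Ne.symm pnx) hxz (Ne.symm qnx) (Ne.symm rnx)
      (Ne.symm pny) hyz (Ne.symm qny) (Ne.symm rny) pnz pnq pnr (Ne.symm qnz)
      (Ne.symm rnz) qnr
  have hgbij := Finite.injective_iff_bijective.mp hginj
  set e := Equiv.ofBijective _ hgbij with he
  refine ⟨e.symm, ?_⟩
  have sx : e.symm x = 0 := by rw [Equiv.symm_apply_eq]; rfl
  have sy : e.symm y = 1 := by rw [Equiv.symm_apply_eq]; rfl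
  have sp : e.symm p = 2 := by rw [Equiv.symm_apply_eq]; rfl
  have sz : e.symm z = 3 := by rw [Equiv.symm_apply_eq]; rfl
  have sq : e.symm q = 4 := by rw [Equiv.symm_apply_eq]; rfl
  have sr : e.symm r = 5 := by rw [Equiv.symm_apply_eq]; rfl
  rw [haxyp, hbxzq, hcyzr]
  simp only [Finset.image_insert, Finset.image_singleton, sx, sy, sp, sz, sq, sr]
end

section
/- Let p(a,b) = a²b² − 2a²b + a² − ab − b² + b, regarded as a polynomial in ℂ[a,b]. Then p is irreducible over ℂ. -/
/-!
Via `MvPolynomial (Fin 2) ℂ ≃ ℂ[b][a]`, `p` is the quadratic `(b - 1)² a² - b a - b (b - 1)` in `a`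
over the UFD `ℂ[b]`. Its coefficients `(b - 1)²` and `-b` are coprime, so by Gauss's lemma it is
irreducible as soon as it has no root in `ℂ(b)`. A root would make the discriminant
`Δ = b² + 4b(b - 1)³` a square in `ℂ(b)`, hence in the integrally closed ring `ℂ[b]`; but `b`
divides `Δ` exactly once.
-/

open Polynomial

theorem IsIntegrallyClosed.isSquare_of_isSquare_algebraMap {R K : Type*} [CommRing R]
    [IsIntegrallyClosed R] [Field K] [Algebra R K] [IsFractionRing R K] {d : R}
    (h : IsSquare (algebraMap R K d)) : IsSquare d := by
  obtain ⟨s, hs⟩ := h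
  obtain ⟨t, rfl⟩ := IsIntegrallyClosed.exists_algebraMap_eq_of_isIntegral_pow (R := R) (K := K)
    two_pos (by rw [sq, ← hs]; exact isIntegral_algebraMap)
  exact ⟨t, IsFractionRing.injective R K (by rw [hs, map_mul])⟩

theorem Polynomial.not_isSquare_X_mul {R : Type*} [CommRing R] [IsDomain R] {q : R[X]}
    (hq : q.coeff 0 ≠ 0) : ¬ IsSquare (X * q) := by
  rintro ⟨t, ht⟩
  obtain ⟨u, rfl⟩ : X ∣ t := by
    have := prime_X.dvd_or_dvd (ht ▸ dvd_mul_right X q)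
    tauto
  have : q = X * (u * u) := mul_left_cancel₀ X_ne_zero (by rw [ht]; ring)
  exact hq (by rw [this, coeff_X_mul_zero])

theorem Polynomial.isPrimitive_quadratic_of_isCoprime {R : Type*} [CommRing R] {a b c : R}
    (h : IsCoprime a b) : (C a * X ^ 2 + C b * X + C c).IsPrimitive := by
  intro r hr
  rw [C_dvd_iff_dvd_coeff] at hr
  refine h.isUnit_of_dvd' ?_ ?_
  · simpa using hr 2
  · simpa using hr 1

theorem Polynomial.irreducible_quadratic_of_not_isSquare_discrim {R : Type*} [CommRing R]
    [IsDomain R] [IsGCDMonoid R] {a b c : R} (ha : a ≠ 0)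
    (hprim : (C a * X ^ 2 + C b * X + C c).IsPrimitive) (hd : ¬ IsSquare (discrim a b c)) :
    Irreducible (C a * X ^ 2 + C b * X + C c) := by
  let f := algebraMap R (FractionRing R)
  rw [hprim.irreducible_iff_irreducible_map_fraction_map (K := FractionRing R)]
  refine irreducible_of_degree_le_three_of_not_isRoot ?_ fun x hx ↦ hd ?_
  · rw [natDegree_map_eq_of_injective (IsFractionRing.injective _ _), natDegree_quadratic ha]
    decide
  · have hroot : f a * (x * x) + f b * x + f c = 0 := by
      simpa [IsRoot, sq] using hx
    refine IsIntegrallyClosed.isSquare_of_isSquare_algebraMap (K := FractionRing R)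
      ⟨2 * f a * x + f b, ?_⟩
    rw [← sq, ← discrim_eq_sq_of_quadratic_eq_zero hroot]
    simp [discrim, f, map_ofNat]

theorem Polynomial.irreducible_sub_one_sq_mul_X_sq_sub_X_mul_X_sub {K : Type*} [Field K]
    [NeZero (2 : K)] :
    Irreducible (C ((X - 1) ^ 2) * X ^ 2 + C (-X) * X + C (-(X * (X - 1))) : K[X][X]) := by
  refine irreducible_quadratic_of_not_isSquare_discrim (pow_ne_zero 2 (X_sub_C_ne_zero 1))
    (isPrimitive_quadratic_of_isCoprime ⟨1, X - 2, by ring⟩) ?_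
  have hΔ : discrim ((X - 1) ^ 2) (-X) (-(X * (X - 1))) =
      (X * (4 * X ^ 3 - 12 * X ^ 2 + 13 * X - 4) : K[X]) := by
    rw [discrim]; ring
  have h4 : (4 : K) = 2 ^ 2 := by norm_num
  rw [hΔ]
  exact not_isSquare_X_mul (by simp [coeff_zero_eq_eval_zero, h4, two_ne_zero])

noncomputable def MvPolynomial.finTwoAlgEquiv (R : Type*) [CommRing R] :
    MvPolynomial (Fin 2) R ≃ₐ[R] R[X][X] :=
  (MvPolynomial.finSuccEquiv R 1).trans (Polynomial.mapAlgEquiv (uniqueAlgEquiv R (Fin 1)))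

theorem MvPolynomial.finTwoAlgEquiv_X_zero (R : Type*) [CommRing R] :
    finTwoAlgEquiv R (X 0) = Polynomial.X := by
  simp [finTwoAlgEquiv, finSuccEquiv_X_zero, Polynomial.coe_mapAlgEquiv]

theorem MvPolynomial.finTwoAlgEquiv_X_one (R : Type*) [CommRing R] :
    finTwoAlgEquiv R (X 1) = Polynomial.C Polynomial.X := by
  rw [finTwoAlgEquiv, AlgEquiv.trans_apply, ← Fin.succ_zero_eq_one, finSuccEquiv_X_succ]
  simp [Polynomial.coe_mapAlgEquiv, uniqueAlgEquiv]

open MvPolynomial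

/-- The polynomial `p(a,b) = a²b² − 2a²b + a² − ab − b² + b` is irreducible
over `ℂ` (here `a = X 0`, `b = X 1`). -/
theorem stmt12 :
    Irreducible ((X 0) ^ 2 * (X 1) ^ 2 - 2 * (X 0) ^ 2 * (X 1) + (X 0) ^ 2
      - (X 0) * (X 1) - (X 1) ^ 2 + (X 1) : MvPolynomial (Fin 2) ℂ) := by
  rw [← MulEquiv.irreducible_iff (finTwoAlgEquiv ℂ)]
  convert Polynomial.irreducible_sub_one_sq_mul_X_sq_sub_X_mul_X_sub (K := ℂ) using 1
  simp only [map_add, map_sub, map_mul, map_pow, map_ofNat, map_neg, map_one,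
    finTwoAlgEquiv_X_zero, finTwoAlgEquiv_X_one]
  ring
end

section
/- There is no complex solution (a, b) with a, b ∈ ℂ \ {0, 1} satisfying simultaneously a − b = 0, a² + 1 = 0, and a³ − 3a² + 2a − 1 = 0. Hence the combinatorial arrangement 13.i of ten lines with thirteen triple points is not geometrically realizable. -/
/- Modulo `a ^ 2 + 1` the cubic reduces to `a + 2`, so a common root is `-2`, and then
`a ^ 2 + 1 = 5`. -/
theorem cubic_ne_zero_of_sq_add_one_eq_zero {R : Type*} [CommRing R] (h5 : (5 : R) ≠ 0)
    {a : R} (ha : a ^ 2 + 1 = 0) : a ^ 3 - 3 * a ^ 2 + 2 * a - 1 ≠ 0 := by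
  intro hcubic
  exact h5 (by linear_combination (1 + (a - 2) * (a - 3)) * ha - (a - 2) * hcubic)

/-- There is no solution `(a,b)` with `a, b ∈ ℂ \ {0,1}` of the system
`a − b = 0`, `a² + 1 = 0`, `a³ − 3a² + 2a − 1 = 0`; hence the combinatorial
arrangement 13.i of ten lines with thirteen triples is not geometrically
realizable. -/
theorem stmt14 :
    ¬ ∃ a b : ℂ, a ≠ 0 ∧ a ≠ 1 ∧ b ≠ 0 ∧ b ≠ 1 ∧
      a - b = 0 ∧ a ^ 2 + 1 = 0 ∧ a ^ 3 - 3 * a ^ 2 + 2 * a - 1 = 0 := by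
  rintro ⟨a, b, -, -, -, -, -, hsq, hcubic⟩
  exact cubic_ne_zero_of_sq_add_one_eq_zero (by norm_num) hsq hcubic
end

section
/- There is no complex number b with b ∉ {0,1} and complex number a ∉ {0,1} satisfying simultaneously a(b² + b − 1) − b(2b − 1) = 0, a(−b² + b + 1) − b = 0, and a(b − (b−1)²) − (2b − 1) = 0. Hence the combinatorial arrangement 13.ii of ten lines with thirteen triple points is not geometrically realizable. -/
/-!
Adding the first two equations gives `2b(a - b) = 0`, so `a = b` once `b ≠ 0`; substituting
into the second equation leaves `b²(b - 1) = 0`, which contradicts `b ∉ {0, 1}`.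
-/

section

variable {R : Type*} [CommRing R] [IsDomain R]

theorem config13ii_eq_of_ne_zero [NeZero (2 : R)] {a b : R} (hb : b ≠ 0)
    (h₁ : a * (b ^ 2 + b - 1) - b * (2 * b - 1) = 0) (h₂ : a * (-b ^ 2 + b + 1) - b = 0) :
    a = b := by
  have h : 2 * b * (a - b) = 0 := by linear_combination h₁ + h₂
  exact sub_eq_zero.mp ((mul_eq_zero.mp h).resolve_left (mul_ne_zero two_ne_zero hb))

theorem config13ii_eq_zero_or_eq_one_of_diag {b : R}
    (h : b * (-b ^ 2 + b + 1) - b = 0) : b = 0 ∨ b = 1 := by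
  have h' : b ^ 2 * (b - 1) = 0 := by linear_combination -h
  simpa [sub_eq_zero] using h'

end

/-- There is no solution `(a,b)` with `a, b ∈ ℂ \ {0,1}` of the system
`a(b²+b−1) − b(2b−1) = 0`, `a(−b²+b+1) − b = 0`,
`a(b−(b−1)²) − (2b−1) = 0`; hence the combinatorial arrangement 13.ii of ten
lines with thirteen triples is not geometrically realizable. -/
theorem stmt15 :
    ¬ ∃ a b : ℂ, a ≠ 0 ∧ a ≠ 1 ∧ b ≠ 0 ∧ b ≠ 1 ∧
      a * (b ^ 2 + b - 1) - b * (2 * b - 1) = 0 ∧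
      a * (-b ^ 2 + b + 1) - b = 0 ∧
      a * (b - (b - 1) ^ 2) - (2 * b - 1) = 0 := by
  rintro ⟨a, b, -, -, hb₀, hb₁, h₁, h₂, -⟩
  obtain rfl : a = b := config13ii_eq_of_ne_zero hb₀ h₁ h₂
  exact (config13ii_eq_zero_or_eq_one_of_diag h₂).elim hb₀ hb₁
end
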